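/- arXiv:0801.4043 — 3 statements merged into one kernel-verified Lean document; each statement's English description precedes it below -/
import Mathlib

section
/- Let P(w) be a C^1 family of N×N complex matrices, and let A(w), B(w) be C^1 families of invertible N×N matrices. If P is of principal type at w_0 (i.e., there exists a direction ν such that the map u ↦ ∂_ν P(w_0)u from ker P(w_0) to C^N/Ran P(w_0) is bijective), then the product A·P·B is of principal type at w_0. -/
/-- `P` is of principal type at `w₀`: for some direction `ν`, the map
`u ↦ ∂_ν P(w₀) u` from `ker P(w₀)` to `ℂ^N / Ran P(w₀)` is bijective. -/
def IsPrincipalTypeAt {d N : ℕ}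
    (P : (Fin d → ℝ) → ((Fin N → ℂ) →L[ℂ] (Fin N → ℂ))) (w₀ : Fin d → ℝ) : Prop :=
  ∃ ν : Fin d → ℝ, Function.Bijective
    (fun u : LinearMap.ker (P w₀ : (Fin N → ℂ) →ₗ[ℂ] (Fin N → ℂ)) =>
      (Submodule.Quotient.mk (fderiv ℝ P w₀ ν u.1) :
        (Fin N → ℂ) ⧸ LinearMap.range (P w₀ : (Fin N → ℂ) →ₗ[ℂ] (Fin N → ℂ))))

/-! Write `Q = A P B`. At `w₀` the kernel of `Q` is `B⁻¹ ker P` and its range is `A (Ran P)`.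
By the Leibniz rule `∂_ν Q = (∂_ν A) P B + A (∂_ν P) B + A P (∂_ν B)`: on `ker Q` the first term
vanishes and the last lies in `Ran Q`, so the map `ker Q → ℂ^N / Ran Q` for `Q` is the one for `P`
composed with the isomorphisms `ker Q ≃ ker P` and `ℂ^N / Ran P ≃ ℂ^N / Ran Q` induced by `B` and
`A`. -/

theorem fderiv_mul_mul_apply {𝕜 E 𝔸 : Type*} [NontriviallyNormedField 𝕜] [NormedAddCommGroup E]
    [NormedSpace 𝕜 E] [NormedRing 𝔸] [NormedAlgebra 𝕜 𝔸] {a b c : E → 𝔸} {x : E}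
    (ha : DifferentiableAt 𝕜 a x) (hb : DifferentiableAt 𝕜 b x) (hc : DifferentiableAt 𝕜 c x)
    (v : E) :
    fderiv 𝕜 (fun y => a y * (b y * c y)) x v =
      fderiv 𝕜 a x v * b x * c x + a x * fderiv 𝕜 b x v * c x + a x * b x * fderiv 𝕜 c x v := by
  rw [fderiv_fun_mul' ha (hb.fun_mul hc), fderiv_fun_mul' hb hc]
  simp only [add_apply, smul_apply, smul_eq_mul,
    MulOpposite.smul_eq_mul_unop, MulOpposite.unop_op]
  noncomm_ring

namespace LinearMap

variable {R V W V' W' : Type*} [Ring R] [AddCommGroup V] [Module R V] [AddCommGroup W]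
  [Module R W] [AddCommGroup V'] [Module R V'] [AddCommGroup W'] [Module R W']

def kerToCokernel (p p' : V →ₗ[R] W) : ker p →ₗ[R] W ⧸ range p :=
  (range p).mkQ ∘ₗ p' ∘ₗ (ker p).subtype

theorem bijective_kerToCokernel_of_leibniz {p p' : V →ₗ[R] W} {q q' : V' →ₗ[R] W'}
    (a : W ≃ₗ[R] W') (b : V' ≃ₗ[R] V) (a' : W →ₗ[R] W') (b' : V' →ₗ[R] V)
    (hq : ∀ v, q v = a (p (b v)))
    (hq' : ∀ v, q' v = a' (p (b v)) + a (p' (b v)) + a (p (b' v)))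
    (h : Function.Bijective (kerToCokernel p p')) :
    Function.Bijective (kerToCokernel q q') := by
  have hker : ∀ u, u ∈ ker q ↔ b u ∈ ker p := by
    intro u
    simp only [mem_ker, hq, LinearEquiv.map_eq_zero_iff]
  have hrange : (range p).map (a : W →ₗ[R] W') = range q := by
    ext w
    simp only [Submodule.mem_map, mem_range, hq]
    constructor
    · rintro ⟨_, ⟨v, rfl⟩, rfl⟩
      exact ⟨b.symm v, by simp⟩
    · rintro ⟨v, rfl⟩
      exact ⟨_, ⟨b v, rfl⟩, rfl⟩
  let e₁ : ker q ≃ ker p := b.toEquiv.subtypeEquiv hker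
  let e₂ := Submodule.Quotient.equiv (range p) (range q) a hrange
  have hfactor : ⇑(kerToCokernel q q') = e₂ ∘ kerToCokernel p p' ∘ e₁ := by
    ext ⟨u, hu⟩
    have hbu : p (b u) = 0 := (hker u).mp hu
    simp only [kerToCokernel, Function.comp_apply, coe_comp, Submodule.coe_subtype,
      Submodule.mkQ_apply]
    rw [hq', hbu, map_zero, zero_add]
    change _ = Submodule.Quotient.mk (a (p' (b u)))
    rw [Submodule.Quotient.eq, add_sub_cancel_left]
    exact ⟨b.symm (b' u), by simp [hq]⟩
  rw [hfactor]
  exact e₂.bijective.comp (h.comp e₁.bijective)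

end LinearMap

theorem isPrincipalTypeAt_iff {d N : ℕ}
    (P : (Fin d → ℝ) → ((Fin N → ℂ) →L[ℂ] (Fin N → ℂ))) (w₀ : Fin d → ℝ) :
    IsPrincipalTypeAt P w₀ ↔ ∃ ν : Fin d → ℝ, Function.Bijective
      (LinearMap.kerToCokernel (P w₀ : (Fin N → ℂ) →ₗ[ℂ] (Fin N → ℂ)) (fderiv ℝ P w₀ ν)) :=
  Iff.rfl

theorem principal_type_invariant_under_invertible_factors
    {d N : ℕ} (P A B : (Fin d → ℝ) → ((Fin N → ℂ) →L[ℂ] (Fin N → ℂ)))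
    (w₀ : Fin d → ℝ)
    (hP : ContDiff ℝ 1 P) (hA : ContDiff ℝ 1 A) (hB : ContDiff ℝ 1 B)
    (hAinv : ∀ w, Function.Bijective (A w))
    (hBinv : ∀ w, Function.Bijective (B w))
    (h : IsPrincipalTypeAt P w₀) :
    IsPrincipalTypeAt (fun w => (A w).comp ((P w).comp (B w))) w₀ := by
  rw [isPrincipalTypeAt_iff] at h ⊢
  obtain ⟨ν, hν⟩ := h
  refine ⟨ν, LinearMap.bijective_kerToCokernel_of_leibniz
    (LinearEquiv.ofBijective (A w₀ : (Fin N → ℂ) →ₗ[ℂ] (Fin N → ℂ)) (hAinv w₀))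
    (LinearEquiv.ofBijective (B w₀ : (Fin N → ℂ) →ₗ[ℂ] (Fin N → ℂ)) (hBinv w₀))
    (fderiv ℝ A w₀ ν) (fderiv ℝ B w₀ ν) (fun _ => rfl) (fun v => ?_) hν⟩
  have hleibniz := fderiv_mul_mul_apply (hA.differentiable one_ne_zero w₀)
    (hP.differentiable one_ne_zero w₀) (hB.differentiable one_ne_zero w₀) ν
  exact congr($hleibniz v)
end

section
/- Let δ_0(t,w) be non-decreasing in t for each w, and define m(t,w) = inf over t_1 ≤ t ≤ t_2 of { |δ_0(t_1,w) − δ_0(t_2,w)| + max(H^{1/2}(t_1,w)⟨δ_0(t_1,w)⟩², H^{1/2}(t_2,w)⟨δ_0(t_2,w)⟩²)/2 }, where ⟨x⟩ = 1 + |x|. Then for all t_1 ≤ t ≤ t_2 and all w: m(t,w) ≤ δ_0(t_2,w) − δ_0(t_1,w) + m(t_1,w) + m(t_2,w), i.e. sup over t ∈ [t_1,t_2] of m(t,w) ≤ δ_0(t_2,w) − δ_0(t_1,w) + m(t_1,w) + m(t_2,w). -/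
/-!
Take almost optimal brackets `a₁ ≤ t₁ ≤ a₂` and `b₁ ≤ t₂ ≤ b₂` for `m t₁` and `m t₂`. The outer
pair `a₁ ≤ t ≤ b₂` brackets `t`. Since `δ₀` is monotone, its gap `δ₀ b₂ - δ₀ a₁` splits as the two
inner gaps plus `δ₀ b₁ - δ₀ a₂ ≤ δ₀ t₂ - δ₀ t₁`, and since the penalties are nonnegative its
penalty is at most the sum of the two inner ones.
-/

namespace BracketWeight

variable (f p : ℝ → ℝ)

noncomputable def bracketCost (a b : ℝ) : ℝ := |f a - f b| + max (p a) (p b) / 2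

noncomputable def bracketWeight (t : ℝ) : ℝ :=
  sInf {x : ℝ | ∃ a b : ℝ, a ≤ t ∧ t ≤ b ∧ x = bracketCost f p a b}

variable {f p}

lemma bracketCost_nonneg (hp : ∀ s, 0 ≤ p s) (a b : ℝ) : 0 ≤ bracketCost f p a b := by
  have := hp a
  have := le_max_left (p a) (p b)
  unfold bracketCost
  positivity

lemma bracketWeight_le_bracketCost (hp : ∀ s, 0 ≤ p s) {a t b : ℝ} (ha : a ≤ t) (hb : t ≤ b) :
    bracketWeight f p t ≤ bracketCost f p a b :=
  csInf_le ⟨0, by rintro _ ⟨a', b', -, -, rfl⟩; exact bracketCost_nonneg hp a' b'⟩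
    ⟨a, b, ha, hb, rfl⟩

lemma exists_bracketCost_lt (t : ℝ) {ε : ℝ} (hε : 0 < ε) :
    ∃ a b, a ≤ t ∧ t ≤ b ∧ bracketCost f p a b < bracketWeight f p t + ε := by
  obtain ⟨_, ⟨a, b, ha, hb, rfl⟩, hlt⟩ :=
    Real.lt_sInf_add_pos (⟨_, t, t, le_rfl, le_rfl, rfl⟩ :
      {x | ∃ a b, a ≤ t ∧ t ≤ b ∧ x = bracketCost f p a b}.Nonempty) hε
  exact ⟨a, b, ha, hb, hlt⟩

lemma bracketCost_outer_le (hf : Monotone f) (hp : ∀ s, 0 ≤ p s) {a₁ a₂ b₁ b₂ t₁ t₂ : ℝ}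
    (ha₁ : a₁ ≤ t₁) (ha₂ : t₁ ≤ a₂) (hb₁ : b₁ ≤ t₂) (hb₂ : t₂ ≤ b₂) (ht : t₁ ≤ t₂) :
    bracketCost f p a₁ b₂ ≤
      f t₂ - f t₁ + bracketCost f p a₁ a₂ + bracketCost f p b₁ b₂ := by
  have gap : ∀ {a b}, a ≤ b → |f a - f b| = f b - f a := fun hab => by
    rw [abs_sub_comm, abs_of_nonneg (sub_nonneg.2 (hf hab))]
  have penalty : max (p a₁) (p b₂) ≤ max (p a₁) (p a₂) + max (p b₁) (p b₂) :=
    max_le (le_add_of_le_of_nonneg (le_max_left _ _) ((hp b₁).trans (le_max_left _ _)))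
      (le_add_of_nonneg_of_le ((hp a₁).trans (le_max_left _ _)) (le_max_right _ _))
  have middle : f b₁ - f a₂ ≤ f t₂ - f t₁ := sub_le_sub (hf hb₁) (hf ha₂)
  unfold bracketCost
  rw [gap (ha₁.trans (ht.trans hb₂)), gap (ha₁.trans ha₂), gap (hb₁.trans hb₂)]
  linarith

theorem bracketWeight_le_add (hf : Monotone f) (hp : ∀ s, 0 ≤ p s) {t₁ t t₂ : ℝ}
    (h₁ : t₁ ≤ t) (h₂ : t ≤ t₂) :
    bracketWeight f p t ≤ f t₂ - f t₁ + bracketWeight f p t₁ + bracketWeight f p t₂ := by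
  refine le_of_forall_pos_le_add fun ε hε => ?_
  obtain ⟨a₁, a₂, ha₁, ha₂, hlt₁⟩ := exists_bracketCost_lt (f := f) (p := p) t₁ (half_pos hε)
  obtain ⟨b₁, b₂, hb₁, hb₂, hlt₂⟩ := exists_bracketCost_lt (f := f) (p := p) t₂ (half_pos hε)
  calc bracketWeight f p t ≤ bracketCost f p a₁ b₂ :=
        bracketWeight_le_bracketCost hp (ha₁.trans h₁) (h₂.trans hb₂)
    _ ≤ f t₂ - f t₁ + bracketCost f p a₁ a₂ + bracketCost f p b₁ b₂ :=
        bracketCost_outer_le hf hp ha₁ ha₂ hb₁ hb₂ (h₁.trans h₂)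
    _ ≤ f t₂ - f t₁ + bracketWeight f p t₁ + bracketWeight f p t₂ + ε := by linarith

end BracketWeight

open BracketWeight in
/-- Quasi-convexity property of the weight `m`. -/
theorem weight_quasiconvex {X : Type*}
    (δ₀ Hhalf m : ℝ → X → ℝ)
    (hδ : ∀ w, Monotone fun t => δ₀ t w)
    (hH : ∀ t w, 0 < Hhalf t w ∧ Hhalf t w ≤ 1)
    (hm : ∀ t w, m t w = sInf {x : ℝ | ∃ t₁ t₂ : ℝ, t₁ ≤ t ∧ t ≤ t₂ ∧
        x = |δ₀ t₁ w - δ₀ t₂ w| +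
          max (Hhalf t₁ w * (1 + |δ₀ t₁ w|) ^ 2)
              (Hhalf t₂ w * (1 + |δ₀ t₂ w|) ^ 2) / 2}) :
    ∀ w : X, ∀ t₁ t t₂ : ℝ, t₁ ≤ t → t ≤ t₂ →
      m t w ≤ δ₀ t₂ w - δ₀ t₁ w + m t₁ w + m t₂ w := by
  intro w t₁ t t₂ h₁ h₂
  have hp : ∀ s, 0 ≤ Hhalf s w * (1 + |δ₀ s w|) ^ 2 := fun s =>
    mul_nonneg (hH s w).1.le (by positivity)
  rw [hm, hm, hm]
  exact bracketWeight_le_add (hδ w) hp h₁ h₂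
end

section
/- Let δ_0(t,w) be non-decreasing in t for each w, and m(t,w) a function with w ↦ δ_0(t,w) and w ↦ m(t,w) uniformly Lipschitz and satisfying the convexity property m(t,w) ≤ δ_0(t_2,w) − δ_0(t_1,w) + m(t_1,w) + m(t_2,w) for t_1 ≤ t ≤ t_2. For T > 0 define ρ_T(t,w) = sup over −T ≤ s ≤ t of ( δ_0(s,w) − δ_0(t,w) + (1/(2T))∫_s^t m(r,w) dr − m(s,w) ) for |t| ≤ T. Then: (i) |ρ_T(t,w)| ≤ m(t,w) for |t| ≤ T, (ii) w ↦ ρ_T(t,w) is uniformly Lipschitz, and (iii) t ↦ δ_0(t,w) + ρ_T(t,w) has distributional derivative ≥ m(t,w)/(2T) on (−T, T). -/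
/-!
Averaging the convexity inequality over `r ∈ [s, t]` bounds `∫_s^t m` by `(t - s)` times
`δ₀ t - δ₀ s + m s + m t`, and `t - s ≤ 2T`, so every term of the supremum defining `ρ_T(t, w)`
is at most `m t w`; the term `s = t` equals `-m t w`. Each term is `4L`-Lipschitz in `w`, hence
so is the supremum. Finally `δ₀ + ρ_T - (1/2T) ∫_0^t m` is the running supremum over `[-T, t]`
of `δ₀ s - (1/2T) ∫_0^s m - m s`, hence non-decreasing.
-/

open MeasureTheory Set
open scoped NNReal

lemma csSup_image_sub_const {ι α : Type*} [ConditionallyCompleteLattice α] [AddGroup α]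
    [AddRightMono α] {A : Set ι} {g : ι → α} (hA : A.Nonempty) (hg : BddAbove (g '' A))
    (c : α) : sSup ((fun i => g i - c) '' A) = sSup (g '' A) - c := by
  simpa [image_image] using ((OrderIso.subRight c).map_csSup' (hA.image g) hg).symm

lemma monotoneOn_csSup_image_Icc {α β : Type*} [Preorder α] [ConditionallyCompleteLattice β]
    {g : α → β} {a b : α} (hg : BddAbove (g '' Icc a b)) :
    MonotoneOn (fun t => sSup (g '' Icc a t)) (Icc a b) :=
  fun _ ht₁ _ ht₂ h12 => csSup_le_csSup (hg.mono (image_mono (Icc_subset_Icc_right ht₂.2)))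
    ((nonempty_Icc.2 ht₁.1).image g) (image_mono (Icc_subset_Icc_right h12))

lemma LipschitzWith.csSup_image {X ι : Type*} [PseudoMetricSpace X] {K : ℝ≥0} {A : Set ι}
    {f : X → ι → ℝ} (hA : A.Nonempty) (hf : ∀ i ∈ A, LipschitzWith K fun x => f x i)
    (hbdd : ∀ x, BddAbove (f x '' A)) : LipschitzWith K fun x => sSup (f x '' A) := by
  refine LipschitzWith.of_le_add_mul K fun x y => csSup_le (hA.image _) ?_
  rintro _ ⟨i, hi, rfl⟩
  exact ((hf i hi).le_add_mul x y).trans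
    (add_le_add_left (le_csSup (hbdd y) (mem_image_of_mem _ hi)) _)

lemma dist_intervalIntegral_le_of_lipschitzWith {X E : Type*} [PseudoMetricSpace X]
    [NormedAddCommGroup E] [NormedSpace ℝ E] {f : ℝ → X → E} {K : ℝ≥0} {a b : ℝ}
    (hf : ∀ r, LipschitzWith K (f r)) {x y : X}
    (hx : IntervalIntegrable (fun r => f r x) volume a b)
    (hy : IntervalIntegrable (fun r => f r y) volume a b) :
    dist (∫ r in a..b, f r x) (∫ r in a..b, f r y) ≤ K * dist x y * |b - a| := by
  rw [dist_eq_norm, ← intervalIntegral.integral_sub hx hy]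
  refine intervalIntegral.norm_integral_le_of_norm_le_const fun r _ => ?_
  rw [← dist_eq_norm]
  exact (hf r).dist_le_mul x y

section PseudoSign

variable {X : Type*} {δ₀ m : ℝ → X → ℝ} {T : ℝ}

variable (δ₀ m T) in
noncomputable def pseudoSignIntegrand (t : ℝ) (w : X) (s : ℝ) : ℝ :=
  δ₀ s w - δ₀ t w + 1 / (2 * T) * (∫ r in s..t, m r w) - m s w

variable (δ₀ m T) in
noncomputable def pseudoSign (t : ℝ) (w : X) : ℝ :=
  sSup (pseudoSignIntegrand δ₀ m T t w '' Icc (-T) t)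

lemma pseudoSignIntegrand_self (t : ℝ) (w : X) :
    pseudoSignIntegrand δ₀ m T t w t = -m t w := by
  simp [pseudoSignIntegrand]

lemma pseudoSignIntegrand_eq_sub {w : X}
    (hint : ∀ a b, IntervalIntegrable (fun r => m r w) volume a b) (t s : ℝ) :
    pseudoSignIntegrand δ₀ m T t w s =
      (δ₀ s w - 1 / (2 * T) * (∫ r in (0:ℝ)..s, m r w) - m s w) -
        (δ₀ t w - 1 / (2 * T) * ∫ r in (0:ℝ)..t, m r w) := by
  rw [pseudoSignIntegrand, ← intervalIntegral.integral_interval_sub_left (hint 0 t) (hint 0 s)]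
  ring

lemma pseudoSignIntegrand_le {s t : ℝ} {w : X} (hT : 0 < T) (hst : s ≤ t)
    (hlen : t - s ≤ 2 * T) (hm0 : 0 ≤ m t w)
    (hint : IntervalIntegrable (fun r => m r w) volume s t)
    (hconv : ∀ r ∈ Icc s t, m r w ≤ δ₀ t w - δ₀ s w + m s w + m t w) :
    pseudoSignIntegrand δ₀ m T t w s ≤ m t w := by
  set K := δ₀ t w - δ₀ s w + m s w + m t w
  have hK : 0 ≤ K := hm0.trans (hconv t ⟨hst, le_rfl⟩)
  have hI : ∫ r in s..t, m r w ≤ (t - s) * K := by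
    simpa using intervalIntegral.integral_mono_on hst hint intervalIntegrable_const hconv
  have havg : 1 / (2 * T) * ∫ r in s..t, m r w ≤ K := calc
    _ ≤ 1 / (2 * T) * ((t - s) * K) := by gcongr
    _ ≤ K := by rw [one_div_mul_eq_div, div_le_iff₀ (by positivity)]; nlinarith
  rw [pseudoSignIntegrand]
  linarith

lemma lipschitzWith_pseudoSignIntegrand [PseudoMetricSpace X] {L : ℝ≥0} {s t : ℝ} (hT : 0 < T)
    (hδLip : ∀ t, LipschitzWith L fun w => δ₀ t w) (hmLip : ∀ t, LipschitzWith L fun w => m t w)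
    (hint : ∀ w, IntervalIntegrable (fun r => m r w) volume s t) (hlen : |t - s| ≤ 2 * T) :
    LipschitzWith (L + L + L + L) fun w => pseudoSignIntegrand δ₀ m T t w s := by
  have havg : LipschitzWith L fun w => 1 / (2 * T) * ∫ r in s..t, m r w := by
    refine LipschitzWith.of_dist_le_mul fun w w' => ?_
    rw [Real.dist_eq, ← mul_sub, abs_mul, abs_of_pos (by positivity), ← Real.dist_eq]
    calc 1 / (2 * T) * dist (∫ r in s..t, m r w) (∫ r in s..t, m r w')
        ≤ 1 / (2 * T) * (L * dist w w' * |t - s|) := by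
          gcongr
          exact dist_intervalIntegral_le_of_lipschitzWith hmLip (hint w) (hint w')
      _ ≤ L * dist w w' := by
          rw [one_div_mul_eq_div, div_le_iff₀ (by positivity)]
          gcongr
  exact (((hδLip s).sub (hδLip t)).add havg).sub (hmLip s)


lemma pseudoSignIntegrand_le_of_mem {s t : ℝ} {w : X} (hT : 0 < T) (hm0 : ∀ t w, 0 ≤ m t w)
    (hint : ∀ (w : X) (s t : ℝ), IntervalIntegrable (fun r => m r w) volume s t)
    (hconv : ∀ w, ∀ t₁ t t₂ : ℝ, t₁ ≤ t → t ≤ t₂ →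
      m t w ≤ δ₀ t₂ w - δ₀ t₁ w + m t₁ w + m t₂ w)
    (ht : t ≤ T) (hs : s ∈ Icc (-T) t) :
    pseudoSignIntegrand δ₀ m T t w s ≤ m t w :=
  pseudoSignIntegrand_le hT hs.2 (by linarith [hs.1]) (hm0 t w) (hint w s t)
    fun r hr => hconv w s r t hr.1 hr.2

lemma bddAbove_pseudoSignIntegrand_image {t : ℝ} {w : X} (hT : 0 < T)
    (hm0 : ∀ t w, 0 ≤ m t w)
    (hint : ∀ (w : X) (s t : ℝ), IntervalIntegrable (fun r => m r w) volume s t)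
    (hconv : ∀ w, ∀ t₁ t t₂ : ℝ, t₁ ≤ t → t ≤ t₂ →
      m t w ≤ δ₀ t₂ w - δ₀ t₁ w + m t₁ w + m t₂ w)
    (ht : t ≤ T) : BddAbove (pseudoSignIntegrand δ₀ m T t w '' Icc (-T) t) := by
  refine ⟨m t w, ?_⟩
  rintro _ ⟨s, hs, rfl⟩
  exact pseudoSignIntegrand_le_of_mem hT hm0 hint hconv ht hs

lemma abs_pseudoSign_le {t : ℝ} {w : X} (hT : 0 < T) (hm0 : ∀ t w, 0 ≤ m t w)
    (hint : ∀ (w : X) (s t : ℝ), IntervalIntegrable (fun r => m r w) volume s t)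
    (hconv : ∀ w, ∀ t₁ t t₂ : ℝ, t₁ ≤ t → t ≤ t₂ →
      m t w ≤ δ₀ t₂ w - δ₀ t₁ w + m t₁ w + m t₂ w)
    (ht : t ∈ Icc (-T) T) : |pseudoSign δ₀ m T t w| ≤ m t w := by
  have hmem : t ∈ Icc (-T) t := ⟨ht.1, le_rfl⟩
  refine abs_le.2 ⟨?_, csSup_le ⟨_, mem_image_of_mem _ hmem⟩ ?_⟩
  · rw [← pseudoSignIntegrand_self t w]
    exact le_csSup (bddAbove_pseudoSignIntegrand_image hT hm0 hint hconv ht.2)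
      (mem_image_of_mem _ hmem)
  · rintro _ ⟨s, hs, rfl⟩
    exact pseudoSignIntegrand_le_of_mem hT hm0 hint hconv ht.2 hs

lemma lipschitzWith_pseudoSign [PseudoMetricSpace X] {L : ℝ≥0} {t : ℝ} (hT : 0 < T)
    (hδLip : ∀ t, LipschitzWith L fun w => δ₀ t w) (hmLip : ∀ t, LipschitzWith L fun w => m t w)
    (hm0 : ∀ t w, 0 ≤ m t w)
    (hint : ∀ (w : X) (s t : ℝ), IntervalIntegrable (fun r => m r w) volume s t)
    (hconv : ∀ w, ∀ t₁ t t₂ : ℝ, t₁ ≤ t → t ≤ t₂ →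
      m t w ≤ δ₀ t₂ w - δ₀ t₁ w + m t₁ w + m t₂ w)
    (ht : t ∈ Icc (-T) T) :
    LipschitzWith (L + L + L + L) fun w => pseudoSign δ₀ m T t w :=
  LipschitzWith.csSup_image (nonempty_Icc.2 ht.1)
    (fun _ hs => lipschitzWith_pseudoSignIntegrand hT hδLip hmLip (fun w => hint w _ t)
      (abs_le.2 ⟨by linarith [hs.2], by linarith [hs.1, ht.2]⟩))
    fun _ => bddAbove_pseudoSignIntegrand_image hT hm0 hint hconv ht.2

lemma monotoneOn_pseudoSign (hT : 0 < T) (hm0 : ∀ t w, 0 ≤ m t w)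
    (hint : ∀ (w : X) (s t : ℝ), IntervalIntegrable (fun r => m r w) volume s t)
    (hconv : ∀ w, ∀ t₁ t t₂ : ℝ, t₁ ≤ t → t ≤ t₂ →
      m t w ≤ δ₀ t₂ w - δ₀ t₁ w + m t₁ w + m t₂ w) (w : X) :
    MonotoneOn (fun t => δ₀ t w + pseudoSign δ₀ m T t w - 1 / (2 * T) * ∫ r in (0:ℝ)..t, m r w)
      (Icc (-T) T) := by
  set P : ℝ → ℝ := fun s => δ₀ s w - 1 / (2 * T) * (∫ r in (0:ℝ)..s, m r w) - m s w
  have hF : ∀ t, pseudoSignIntegrand δ₀ m T t w =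
      fun s => P s - (δ₀ t w - 1 / (2 * T) * ∫ r in (0:ℝ)..t, m r w) :=
    fun t => funext (pseudoSignIntegrand_eq_sub (hint w) t)
  have hP : BddAbove (P '' Icc (-T) T) := by
    refine ⟨m T w + (δ₀ T w - 1 / (2 * T) * ∫ r in (0:ℝ)..T, m r w), ?_⟩
    rintro _ ⟨s, hs, rfl⟩
    have := pseudoSignIntegrand_le_of_mem (w := w) hT hm0 hint hconv le_rfl hs
    rw [hF] at this
    linarith
  refine (monotoneOn_csSup_image_Icc hP).congr fun t ht => ?_
  have hbdd : BddAbove (P '' Icc (-T) t) := hP.mono (image_mono (Icc_subset_Icc_right ht.2))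
  simp only [pseudoSign, hF, csSup_image_sub_const (nonempty_Icc.2 ht.1) hbdd]
  ring

end PseudoSign

theorem pseudo_sign_construction_general {X : Type*} [MetricSpace X]
    (δ₀ m : ℝ → X → ℝ) (T : ℝ) (hT : 0 < T) (L : NNReal)
    (hδLip : ∀ t, LipschitzWith L fun w => δ₀ t w)
    (hmLip : ∀ t, LipschitzWith L fun w => m t w)
    (hm0 : ∀ t w, 0 ≤ m t w)
    (hint : ∀ (w : X) (s t : ℝ), IntervalIntegrable (fun r => m r w) volume s t)
    (hconv : ∀ w, ∀ t₁ t t₂ : ℝ, t₁ ≤ t → t ≤ t₂ →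
      m t w ≤ δ₀ t₂ w - δ₀ t₁ w + m t₁ w + m t₂ w)
    (ρ : ℝ → X → ℝ)
    (hρ : ∀ t w, |t| ≤ T → ρ t w =
      sSup ((fun s => δ₀ s w - δ₀ t w + (1 / (2 * T)) * (∫ r in s..t, m r w) - m s w) ''
        Set.Icc (-T) t)) :
    (∀ t w, |t| ≤ T → |ρ t w| ≤ m t w) ∧
    (∃ L' : NNReal, ∀ t, |t| ≤ T → LipschitzWith L' fun w => ρ t w) ∧
    (∀ w : X, MonotoneOn
      (fun t => δ₀ t w + ρ t w - (1 / (2 * T)) * ∫ r in (0:ℝ)..t, m r w)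
      (Set.Icc (-T) T)) := by
  have hρ' : ∀ t w, |t| ≤ T → ρ t w = pseudoSign δ₀ m T t w := hρ
  refine ⟨fun t w ht => ?_, ⟨L + L + L + L, fun t ht => ?_⟩, fun w => ?_⟩
  · rw [hρ' t w ht]
    exact abs_pseudoSign_le hT hm0 hint hconv (abs_le.1 ht)
  · rw [funext fun w => hρ' t w ht]
    exact lipschitzWith_pseudoSign hT hδLip hmLip hm0 hint hconv (abs_le.1 ht)
  · refine (monotoneOn_pseudoSign hT hm0 hint hconv w).congr fun t ht => ?_
    simp only [hρ' t w (abs_le.2 ht)]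

/-- Construction of the pseudo-sign `δ₀ + ρ_T`. -/
theorem pseudo_sign_construction {X : Type*} [MetricSpace X]
    (δ₀ m : ℝ → X → ℝ) (T : ℝ) (hT : 0 < T) (L : NNReal)
    (hδLip : ∀ t, LipschitzWith L fun w => δ₀ t w)
    (hmLip : ∀ t, LipschitzWith L fun w => m t w)
    (hmono : ∀ w, Monotone fun t => δ₀ t w)
    (hm0 : ∀ t w, 0 ≤ m t w)
    (C : ℝ) (hmbd : ∀ t w, m t w ≤ C)
    (hint : ∀ (w : X) (s t : ℝ), IntervalIntegrable (fun r => m r w) volume s t)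
    (hconv : ∀ w, ∀ t₁ t t₂ : ℝ, t₁ ≤ t → t ≤ t₂ →
      m t w ≤ δ₀ t₂ w - δ₀ t₁ w + m t₁ w + m t₂ w)
    (ρ : ℝ → X → ℝ)
    (hρ : ∀ t w, |t| ≤ T → ρ t w =
      sSup ((fun s => δ₀ s w - δ₀ t w + (1 / (2 * T)) * (∫ r in s..t, m r w) - m s w) ''
        Set.Icc (-T) t)) :
    (∀ t w, |t| ≤ T → |ρ t w| ≤ m t w) ∧
    (∃ L' : NNReal, ∀ t, |t| ≤ T → LipschitzWith L' fun w => ρ t w) ∧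
    (∀ w : X, MonotoneOn
      (fun t => δ₀ t w + ρ t w - (1 / (2 * T)) * ∫ r in (0:ℝ)..t, m r w)
      (Set.Icc (-T) T)) :=
  pseudo_sign_construction_general δ₀ m T hT L hδLip hmLip hm0 hint hconv ρ hρ
end
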